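/- arXiv:1607.07407 — 3 statements merged into one kernel-verified Lean document; each statement's English description precedes it below -/
import Mathlib

section
/- Colimits in the category Mod(T) of models of a partial Horn theory T can be computed as colim_{j∈J}(M_j) ≅ Syn(colim_{j∈J}(Lang(M_j))), where the colimit on the right is taken in the category of theories under T. -/
open CategoryTheory CategoryTheory.Limits

/-- Colimits in the category `Mod(T)` of models of a partial Horn theory
`T` can be computed as `colim_{j∈J} M_j ≅ Syn(colim_{j∈J} Lang(M_j))`, where the colimit on
the right is taken in the category `T/Th` of theories under `T`.  Abstractly: `Mod(T)` is a
category `C` equipped with the fully faithful functor `Lang : C ⥤ D` into the category `D`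
of theories under `T` and its right adjoint `Syn : D ⥤ C`; then for any diagram
`F : J ⥤ C`, the colimit of `F` is isomorphic to `Syn` applied to the colimit of
`F ⋙ Lang`. -/
theorem stmt3 {C : Type*} {D : Type*} {J : Type*}
    [Category C] [Category D] [Category J]
    (Lang : C ⥤ D) (Syn : D ⥤ C) (adj : Lang ⊣ Syn)
    [Lang.Full] [Lang.Faithful]
    (F : J ⥤ C) [HasColimit F] [HasColimit (F ⋙ Lang)] :
    Nonempty (colimit F ≅ Syn.obj (colimit (F ⋙ Lang))) := by
  have : PreservesColimitsOfSize Lang := adj.leftAdjoint_preservesColimits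
  -- the unit of an adjunction with fully faithful left adjoint is an isomorphism
  exact ⟨asIso (adj.unit.app (colimit F)) ≪≫ Syn.mapIso (preservesColimitIso Lang F)⟩
end

section
/- For any morphism of partial Horn theories f : T → T', the functor f_! : Mod(T) → Mod(T') defined by f_!(M) = Syn(Lang(M) ⨿_T T') is left adjoint to the restriction functor f* : Mod(T') → Mod(T). -/
/-! A formalization of multi-sorted partial Horn logic over a fixed set `S` of sorts:
signatures, terms, Horn sequents, partial models, semantic theoremhood, and the
theory `Lang(M)` of a model `M`. -/

variable {S : Type}

/-- A signature: function symbols with arities and result sorts, and predicate symbols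
with arities. -/
structure PHSig (S : Type) where
  F : Type
  domF : F → List S
  codF : F → S
  P : Type
  domP : P → List S

/-- Terms over a signature with variables `V` (an `S`-indexed family). -/
inductive PHTerm (σ : PHSig S) (V : S → Type) : S → Type where
  | var {s : S} : V s → PHTerm σ V s
  | app (f : σ.F) (args : ∀ i : Fin (σ.domF f).length, PHTerm σ V ((σ.domF f).get i)) :
      PHTerm σ V (σ.codF f)

/-- Atomic formulas: equations, definedness assertions `t↓`, and predicate applications. -/
inductive PHAtom (σ : PHSig S) (V : S → Type) : Type where
  | eq {s : S} (t₁ t₂ : PHTerm σ V s) : PHAtom σ V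
  | dfd {s : S} (t : PHTerm σ V s) : PHAtom σ V
  | rel (R : σ.P) (args : ∀ i : Fin (σ.domP R).length, PHTerm σ V ((σ.domP R).get i)) :
      PHAtom σ V

/-- A Horn sequent `φ₁ ∧ … ∧ φₙ ⊢_V ψ`. -/
structure PHSequent (σ : PHSig S) where
  V : S → Type
  hyps : List (PHAtom σ V)
  concl : PHAtom σ V

/-- A partial model of a signature: carriers, partial interpretations of function symbols,
and relations interpreting the predicate symbols. -/
structure PHModel (σ : PHSig S) where
  carrier : S → Type
  interpF : (f : σ.F) → (∀ i : Fin (σ.domF f).length, carrier ((σ.domF f).get i)) →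
      Option (carrier (σ.codF f))
  interpP : (R : σ.P) → (∀ i : Fin (σ.domP R).length, carrier ((σ.domP R).get i)) → Prop

/-- Collecting a family of optional values into an optional family. -/
def optAll {n : ℕ} {β : Fin n → Type} (g : ∀ i, Option (β i)) : Option (∀ i, β i) :=
  if h : ∀ i, (g i).isSome then some (fun i => (g i).get (h i)) else none

/-- Partial evaluation of a term in a model under a total assignment of the variables. -/
def evalTm {σ : PHSig S} {V : S → Type} (M : PHModel σ) (ρ : ∀ s, V s → M.carrier s) :
    {s : S} → PHTerm σ V s → Option (M.carrier s)
  | _, .var v => some (ρ _ v)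
  | _, .app f args => (optAll (fun i => evalTm M ρ (args i))).bind (M.interpF f)

/-- Satisfaction of an atomic formula under an assignment. -/
def satAtom {σ : PHSig S} {V : S → Type} (M : PHModel σ) (ρ : ∀ s, V s → M.carrier s) :
    PHAtom σ V → Prop
  | .eq t₁ t₂ => (evalTm M ρ t₁).isSome ∧ evalTm M ρ t₁ = evalTm M ρ t₂
  | .dfd t => (evalTm M ρ t).isSome
  | .rel R args => ∃ h : ∀ i, (evalTm M ρ (args i)).isSome,
      M.interpP R (fun i => (evalTm M ρ (args i)).get (h i))

/-- Satisfaction of a sequent in a model. -/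
def PHModel.satSeq {σ : PHSig S} (M : PHModel σ) (sq : PHSequent σ) : Prop :=
  ∀ ρ : ∀ s, sq.V s → M.carrier s,
    (∀ a ∈ sq.hyps, satAtom M ρ a) → satAtom M ρ sq.concl

/-- A model of a set of axioms. -/
def PHModels {σ : PHSig S} (M : PHModel σ) (T : Set (PHSequent σ)) : Prop :=
  ∀ sq ∈ T, M.satSeq sq

/-- A partial Horn theory over the sorts `S`. -/
structure PHTheory (S : Type) where
  sig : PHSig S
  ax : Set (PHSequent sig)

/-- Theoremhood: a sequent is a theorem of a theory when it holds in every model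
(partial Horn logic is sound and complete for this semantics). -/
def PHThm (T : PHTheory S) (sq : PHSequent T.sig) : Prop :=
  ∀ M : PHModel T.sig, PHModels M T.ax → M.satSeq sq

/-- The empty variable context. -/
def emptyV : S → Type := fun _ => PEmpty

/-- The closed sequent `⊢ a`. -/
def closedSeq {σ : PHSig S} (a : PHAtom σ emptyV) : PHSequent σ :=
  ⟨emptyV, [], a⟩

/-- The signature of `Lang(M)`: that of `σ` together with a constant `O_a` for every
element `a` of the `S`-set `A`. -/
@[reducible] def langSig (σ : PHSig S) (A : S → Type) : PHSig S where
  F := σ.F ⊕ Σ s : S, A s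
  domF := Sum.elim σ.domF (fun _ => [])
  codF := Sum.elim σ.codF Sigma.fst
  P := σ.P
  domP := σ.domP

/-- The constant `O_a`. -/
def constTm {σ : PHSig S} {A : S → Type} {V : S → Type} {s : S} (a : A s) :
    PHTerm (langSig σ A) V s :=
  @PHTerm.app S (langSig σ A) V (Sum.inr ⟨s, a⟩) (fun i => i.elim0)

/-- Embedding of `σ`-terms into `Lang`-terms. -/
def liftTm {σ : PHSig S} {A : S → Type} {V : S → Type} :
    {s : S} → PHTerm σ V s → PHTerm (langSig σ A) V s
  | _, .var v => .var v
  | _, .app f args => @PHTerm.app S (langSig σ A) V (Sum.inl f) (fun i => liftTm (args i))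

/-- Embedding of `σ`-atoms into `Lang`-atoms. -/
def liftAtom {σ : PHSig S} {A : S → Type} {V : S → Type} :
    PHAtom σ V → PHAtom (langSig σ A) V
  | .eq t₁ t₂ => .eq (liftTm t₁) (liftTm t₂)
  | .dfd t => .dfd (liftTm t)
  | .rel R args => .rel R (fun i => liftTm (args i))

/-- Embedding of `σ`-sequents into `Lang`-sequents. -/
def liftSeq {σ : PHSig S} {A : S → Type} (sq : PHSequent σ) :
    PHSequent (langSig σ A) :=
  ⟨sq.V, sq.hyps.map liftAtom, liftAtom sq.concl⟩

/-- Axioms of `Lang(M)`: the axioms of `T` together with `⊢ O_a↓`,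
`⊢ σ(O_{a₁},…,O_{a_k}) = O_{M(σ)(a₁,…,a_k)}` whenever defined, and
`⊢ R(O_{a₁},…,O_{a_k})` whenever it holds. -/
inductive LangAx {σ : PHSig S} (T : Set (PHSequent σ)) (M : PHModel σ) :
    PHSequent (langSig σ M.carrier) → Prop where
  | lift {sq : PHSequent σ} : sq ∈ T → LangAx T M (liftSeq sq)
  | const {s : S} (a : M.carrier s) : LangAx T M (closedSeq (.dfd (constTm a)))
  | op (f : σ.F) (args : ∀ i : Fin (σ.domF f).length, M.carrier ((σ.domF f).get i))
      (b : M.carrier (σ.codF f)) : M.interpF f args = some b →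
      LangAx T M (closedSeq (.eq (@PHTerm.app S (langSig σ M.carrier) emptyV (Sum.inl f) (fun i => constTm (args i)))
        (constTm (σ := σ) b)))
  | rel (R : σ.P) (args : ∀ i : Fin (σ.domP R).length, M.carrier ((σ.domP R).get i)) :
      M.interpP R args →
      LangAx T M (closedSeq (.rel R (fun i => constTm (args i))))

/-- The theory `Lang(M)`. -/
def LangTheory {σ : PHSig S} (T : Set (PHSequent σ)) (M : PHModel σ) : PHTheory S :=
  ⟨langSig σ M.carrier, setOf (LangAx T M)⟩

/-- The variables standing for the arguments of a function symbol with arity `l`. -/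
@[reducible] def argVars (l : List S) : S → Type := fun s => { i : Fin l.length // l.get i = s }

/-- Simultaneous substitution in terms. -/
def substTm {σ : PHSig S} {V W : S → Type} (θ : ∀ s, V s → PHTerm σ W s) :
    {s : S} → PHTerm σ V s → PHTerm σ W s
  | _, .var v => θ _ v
  | _, .app f args => .app f (fun i => substTm θ (args i))

/-- A morphism of signatures (the data of a morphism of theories): each function symbol is
sent to a term of the target signature in the variables of its arguments, and each
predicate symbol to a predicate symbol of the same arity. -/
structure SigHom (σ₁ σ₂ : PHSig S) where
  onF : (f : σ₁.F) → PHTerm σ₂ (argVars (σ₁.domF f)) (σ₁.codF f)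
  onP : σ₁.P → σ₂.P
  onPdom : ∀ R, σ₂.domP (onP R) = σ₁.domP R

/-- Translation of terms along a signature morphism. -/
def mapTm {σ₁ σ₂ : PHSig S} (h : SigHom σ₁ σ₂) {V : S → Type} :
    {s : S} → PHTerm σ₁ V s → PHTerm σ₂ V s
  | _, .var v => .var v
  | _, .app f args => substTm (fun _ v => v.2 ▸ mapTm h (args v.1)) (h.onF f)

/-- Transport of argument families along an equality of arities. -/
def castArgs {C : S → Type} {l l' : List S} (h : l = l')
    (x : ∀ i : Fin l.length, C (l.get i)) : ∀ i : Fin l'.length, C (l'.get i) := by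
  subst h; exact x

/-- Translation of atoms along a signature morphism. -/
def mapAtom {σ₁ σ₂ : PHSig S} (h : SigHom σ₁ σ₂) {V : S → Type} :
    PHAtom σ₁ V → PHAtom σ₂ V
  | .eq t₁ t₂ => .eq (mapTm h t₁) (mapTm h t₂)
  | .dfd t => .dfd (mapTm h t)
  | .rel R args => .rel (h.onP R) (castArgs (h.onPdom R).symm (fun i => mapTm h (args i)))

/-- Translation of sequents along a signature morphism. -/
def mapSeq {σ₁ σ₂ : PHSig S} (h : SigHom σ₁ σ₂) (sq : PHSequent σ₁) : PHSequent σ₂ :=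
  ⟨sq.V, sq.hyps.map (mapAtom h), mapAtom h sq.concl⟩

/-- Composition of signature morphisms. -/
def compHom {σ₁ σ₂ σ₃ : PHSig S} (g : SigHom σ₂ σ₃) (h : SigHom σ₁ σ₂) : SigHom σ₁ σ₃ where
  onF f := mapTm g (h.onF f)
  onP := g.onP ∘ h.onP
  onPdom R := by rw [Function.comp_apply, g.onPdom, h.onPdom]

/-- `h` is a morphism of theories `Θ₁ → Θ₂`: it sends axioms to theorems. -/
def IsTheoryMor (Θ₁ Θ₂ : PHTheory S) (h : SigHom Θ₁.sig Θ₂.sig) : Prop :=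
  ∀ sq ∈ Θ₁.ax, PHThm Θ₂ (mapSeq h sq)

/-- Morphisms of theories into `Θ` are identified up to provable equality in `Θ`. -/
def homEquiv {σ₁ : PHSig S} (Θ : PHTheory S) (g₁ g₂ : SigHom σ₁ Θ.sig) : Prop :=
  g₁.onP = g₂.onP ∧
  ∀ f : σ₁.F, PHThm Θ ⟨argVars (σ₁.domF f), [], .eq (g₁.onF f) (g₂.onF f)⟩

/-- A homomorphism of partial models. -/
structure ModHom {σ : PHSig S} (M N : PHModel σ) where
  h : ∀ s, M.carrier s → N.carrier s
  mapF : ∀ (f : σ.F) (args) (b), M.interpF f args = some b →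
      N.interpF f (fun i => h _ (args i)) = some (h _ b)
  mapP : ∀ (R : σ.P) (args), M.interpP R args → N.interpP R (fun i => h _ (args i))

/-- The signature morphism `Lang(h) : Lang(M) → Lang(N)` induced by a homomorphism
`h : M → N`: it is the identity on the symbols of `σ` and sends `O_a` to `O_{h(a)}`. -/
def LangHomOf {σ : PHSig S} {M N : PHModel σ} (h : ModHom M N) :
    SigHom (langSig σ M.carrier) (langSig σ N.carrier) where
  onF f :=
    match f with
    | Sum.inl f => @PHTerm.app S (langSig σ N.carrier) _ (Sum.inl f) (fun i => .var ⟨i, rfl⟩)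
    | Sum.inr ⟨s, a⟩ => constTm (σ := σ) (h.h s a)
  onP := id
  onPdom _ := rfl

/-- The condition that a signature morphism `Lang(M) → Lang(N)` is a morphism of theories
under `T`, i.e. commutes with the canonical inclusions of `T`. -/
def UnderLang {σ : PHSig S} {A B : S → Type}
    (g : SigHom (langSig σ A) (langSig σ B)) : Prop :=
  (∀ f : σ.F, g.onF (Sum.inl f) =
    @PHTerm.app S (langSig σ B) _ (Sum.inl f) (fun i => .var ⟨i, rfl⟩)) ∧
  ∀ R : σ.P, g.onP R = R

/-- Closed terms of a theory. -/
def ClosedTm (Θ : PHTheory S) (s : S) := PHTerm Θ.sig emptyV s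

/-- Provably defined closed terms. -/
def DefTm (Θ : PHTheory S) (s : S) := { t : ClosedTm Θ s // PHThm Θ (closedSeq (.dfd t)) }

/-- Provable equality of defined closed terms. -/
def termRel (Θ : PHTheory S) (s : S) : DefTm Θ s → DefTm Θ s → Prop :=
  fun t₁ t₂ => PHThm Θ (closedSeq (.eq t₁.1 t₂.1))

/-- The carrier of the initial (term) model: closed defined terms modulo provable
equality. -/
def TermCarrier (Θ : PHTheory S) (s : S) : Type := Quot (termRel Θ s)

open Classical in
/-- The initial model of a partial Horn theory, built from closed terms modulo provable
equality. -/
noncomputable def TermModel (Θ : PHTheory S) : PHModel Θ.sig where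
  carrier := TermCarrier Θ
  interpF f args :=
    if h : PHThm Θ (closedSeq (.dfd (.app f (fun i => ((args i).out).1)))) then
      some (Quot.mk _ ⟨.app f (fun i => ((args i).out).1), h⟩)
    else none
  interpP R args := PHThm Θ (closedSeq (.rel R (fun i => ((args i).out).1)))

/-- Restriction of a model along a signature morphism. -/
def restrict {σ₁ σ₂ : PHSig S} (h : SigHom σ₁ σ₂) (M : PHModel σ₂) : PHModel σ₁ where
  carrier := M.carrier
  interpF f args := evalTm M
    (fun s (v : argVars (σ₁.domF f) s) => v.2 ▸ args v.1) (h.onF f)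
  interpP R args := M.interpP (h.onP R) (castArgs (h.onPdom R).symm args)

/-- Weakening of closed terms to an arbitrary variable context. -/
def weakenClosed {σ : PHSig S} {V : S → Type} {s : S} (t : PHTerm σ emptyV s) :
    PHTerm σ V s :=
  substTm (fun _ v => v.elim) t

/-- The counit `ε_Θ : Lang(Syn(Θ)) → Θ`, sending `O_t` to (a representative of) `t` and
restricting to the structure morphism `ι : T → Θ` on the symbols of `T`. -/
noncomputable def counitHom (TT Θ : PHTheory S) (ι : SigHom TT.sig Θ.sig) :
    SigHom (langSig TT.sig (TermCarrier Θ)) Θ.sig where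
  onF f :=
    match f with
    | Sum.inl f => ι.onF f
    | Sum.inr ⟨_, q⟩ => weakenClosed ((Quot.out q).1)
  onP := ι.onP
  onPdom := ι.onPdom

/-- The canonical inclusion `σ → langSig σ A` (identity on the symbols of `σ`). -/
def inclLang {σ : PHSig S} {A : S → Type} : SigHom σ (langSig σ A) where
  onF f := @PHTerm.app S (langSig σ A) _ (Sum.inl f) (fun i => .var ⟨i, rfl⟩)
  onP R := R
  onPdom _ := rfl

/-- The translation `Lang(M) → Lang(M) ⨿_T T'` induced by `f : T → T'`, where the pushout
theory is presented on the signature of `T'` extended by the constants of `M`. -/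
def pushHom {σ σ' : PHSig S} (f : SigHom σ σ') (A : S → Type) :
    SigHom (langSig σ A) (langSig σ' A) where
  onF g :=
    match g with
    | Sum.inl g => liftTm (f.onF g)
    | Sum.inr ⟨_, a⟩ => constTm a
  onP := f.onP
  onPdom := f.onPdom

/-- The axioms of the pushout theory `Lang(M) ⨿_T T'`: the (lifted) axioms of `T'`
together with the translated axioms of `Lang(M)`. -/
def pushAx {σ σ' : PHSig S} (T : Set (PHSequent σ)) (T' : Set (PHSequent σ'))
    (f : SigHom σ σ') (M : PHModel σ) : Set (PHSequent (langSig σ' M.carrier)) :=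
  { sq | (∃ t ∈ T', sq = liftSeq t) ∨
         (∃ t, LangAx T M t ∧ sq = mapSeq (pushHom f M.carrier) t) }

/-- The pushout theory `Lang(M) ⨿_T T'`. -/
def PushTheory {σ σ' : PHSig S} (T : Set (PHSequent σ)) (T' : Set (PHSequent σ'))
    (f : SigHom σ σ') (M : PHModel σ) : PHTheory S :=
  ⟨langSig σ' M.carrier, pushAx T T' f M⟩

/-- The left adjoint `f_! : Mod(T) → Mod(T')`, `f_!(M) = Syn(Lang(M) ⨿_T T')`: the
restriction to `T'` of the initial model of the pushout theory. -/
noncomputable def fShriek {σ σ' : PHSig S} (T : Set (PHSequent σ)) (T' : Set (PHSequent σ'))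
    (f : SigHom σ σ') (M : PHModel σ) : PHModel σ' :=
  restrict inclLang (TermModel (PushTheory T T' f M))

/-! ### Basic option lemmas -/

theorem get_congr {α : Type _} {o₁ o₂ : Option α} (h : o₁ = o₂) {h₁ : o₁.isSome} :
    o₁.get h₁ = o₂.get (h ▸ h₁) := by subst h; rfl

theorem optAll_some {n : ℕ} {β : Fin n → Type} (x : ∀ i, β i) :
    optAll (fun i => some (x i)) = some x := by
  simp [optAll]

theorem optAll_isSome_iff {n : ℕ} {β : Fin n → Type} (g : ∀ i, Option (β i)) :
    (optAll g).isSome ↔ ∀ i, (g i).isSome := by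
  unfold optAll; split <;> simp_all

theorem optAll_eq_get {n : ℕ} {β : Fin n → Type} (g : ∀ i, Option (β i))
    (h : ∀ i, (g i).isSome) : optAll g = some (fun i => (g i).get (h i)) := by
  unfold optAll; rw [dif_pos h]

theorem optAll_none {n : ℕ} {β : Fin n → Type} (g : ∀ i, Option (β i)) (j : Fin n)
    (h : g j = none) : optAll g = none := by
  unfold optAll
  rw [dif_neg]
  intro h'
  have := h' j
  rw [h] at this
  simp at this

/-! ### Evaluation equations -/

@[simp] theorem evalTm_var {σ : PHSig S} {V : S → Type} (M : PHModel σ)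
    (ρ : ∀ s, V s → M.carrier s) {s : S} (v : V s) :
    evalTm M ρ (.var v) = some (ρ _ v) := rfl

@[simp] theorem evalTm_app {σ : PHSig S} {V : S → Type} (M : PHModel σ)
    (ρ : ∀ s, V s → M.carrier s) (f : σ.F)
    (args : ∀ i : Fin (σ.domF f).length, PHTerm σ V ((σ.domF f).get i)) :
    evalTm M ρ (.app f args) = (optAll (fun i => evalTm M ρ (args i))).bind (M.interpF f) := rfl

@[simp] theorem substTm_var {σ : PHSig S} {V W : S → Type} (θ : ∀ s, V s → PHTerm σ W s)
    {s : S} (v : V s) : substTm θ (.var v) = θ _ v := rfl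

@[simp] theorem substTm_app {σ : PHSig S} {V W : S → Type} (θ : ∀ s, V s → PHTerm σ W s)
    (f : σ.F) (args : ∀ i : Fin (σ.domF f).length, PHTerm σ V ((σ.domF f).get i)) :
    substTm θ (.app f args) = .app f (fun i => substTm θ (args i)) := rfl

@[simp] theorem mapTm_app {σ₁ σ₂ : PHSig S} (h : SigHom σ₁ σ₂) {V : S → Type}
    (f : σ₁.F) (args : ∀ i : Fin (σ₁.domF f).length, PHTerm σ₁ V ((σ₁.domF f).get i)) :
    mapTm h (.app f args) = substTm (fun _ v => v.2 ▸ mapTm h (args v.1)) (h.onF f) := rfl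

@[simp] theorem liftTm_app {σ : PHSig S} {A V : S → Type} (f : σ.F)
    (args : ∀ i : Fin (σ.domF f).length, PHTerm σ V ((σ.domF f).get i)) :
    liftTm (A := A) (.app f args) =
      @PHTerm.app S (langSig σ A) V (Sum.inl f) (fun i => liftTm (args i)) := rfl

/-! ### Closed contexts -/

def rho0 {C : S → Type} : ∀ s, emptyV s → C s := fun _ v => PEmpty.elim v

theorem thm_closed_elim {Θ : PHTheory S} {a : PHAtom Θ.sig emptyV}
    (h : PHThm Θ (closedSeq a)) {P : PHModel Θ.sig} (hP : PHModels P Θ.ax) :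
    satAtom P rho0 a :=
  h P hP rho0 (by intro x hx; cases hx)

theorem thm_closed_intro {Θ : PHTheory S} {a : PHAtom Θ.sig emptyV}
    (h : ∀ (P : PHModel Θ.sig), PHModels P Θ.ax → satAtom P rho0 a) :
    PHThm Θ (closedSeq a) := by
  intro P hP ρ _
  have hρ : ρ = rho0 := by funext s v; exact v.elim
  rw [hρ]
  exact h P hP

theorem dfd_elim {Θ : PHTheory S} {s : S} {t : ClosedTm Θ s}
    (h : PHThm Θ (closedSeq (.dfd t))) {P : PHModel Θ.sig} (hP : PHModels P Θ.ax) :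
    (evalTm P rho0 t).isSome :=
  thm_closed_elim h hP

theorem eqT_elim {Θ : PHTheory S} {s : S} {t u : ClosedTm Θ s}
    (h : PHThm Θ (closedSeq (.eq t u))) {P : PHModel Θ.sig} (hP : PHModels P Θ.ax) :
    (evalTm P rho0 t).isSome ∧ evalTm P rho0 t = evalTm P rho0 u :=
  thm_closed_elim h hP

theorem eqT_symm {Θ : PHTheory S} {s : S} {t u : ClosedTm Θ s}
    (h : PHThm Θ (closedSeq (.eq t u))) : PHThm Θ (closedSeq (.eq u t)) :=
  thm_closed_intro fun P hP => by
    obtain ⟨h1, h2⟩ := eqT_elim h hP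
    exact ⟨h2 ▸ h1, h2.symm⟩

theorem eqT_trans {Θ : PHTheory S} {s : S} {t u w : ClosedTm Θ s}
    (h : PHThm Θ (closedSeq (.eq t u))) (h' : PHThm Θ (closedSeq (.eq u w))) :
    PHThm Θ (closedSeq (.eq t w)) :=
  thm_closed_intro fun P hP => by
    obtain ⟨h1, h2⟩ := eqT_elim h hP
    obtain ⟨h1', h2'⟩ := eqT_elim h' hP
    exact ⟨h1, h2.trans h2'⟩

theorem eqT_refl {Θ : PHTheory S} {s : S} {t : ClosedTm Θ s}
    (h : PHThm Θ (closedSeq (.dfd t))) : PHThm Θ (closedSeq (.eq t t)) :=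
  thm_closed_intro fun P hP => ⟨dfd_elim h hP, rfl⟩

/-! ### The term quotient -/

theorem termRel_equiv (Θ : PHTheory S) (s : S) : Equivalence (termRel Θ s) where
  refl d := eqT_refl d.2
  symm := eqT_symm
  trans := eqT_trans

theorem mk_eq_iff {Θ : PHTheory S} {s : S} {d₁ d₂ : DefTm Θ s} :
    Quot.mk (termRel Θ s) d₁ = Quot.mk _ d₂ ↔ termRel Θ s d₁ d₂ := by
  rw [Quot.eq]
  exact (termRel_equiv Θ s).eqvGen_iff

noncomputable def repOf {Θ : PHTheory S} {s : S} (c : TermCarrier Θ s) : ClosedTm Θ s :=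
  (Quot.out c).1

theorem repOf_dfd {Θ : PHTheory S} {s : S} (c : TermCarrier Θ s) :
    PHThm Θ (closedSeq (.dfd (repOf c))) :=
  (Quot.out c).2

theorem repOf_mk {Θ : PHTheory S} {s : S} (d : DefTm Θ s) :
    PHThm Θ (closedSeq (.eq (repOf (Quot.mk (termRel Θ s) d)) d.1)) :=
  mk_eq_iff.1 (Quot.out_eq _)

/-! ### Satisfaction of relational atoms -/

theorem sat_rel_iff {σ : PHSig S} {V : S → Type} {P : PHModel σ}
    {ρ : ∀ s, V s → P.carrier s} {R : σ.P}
    {u : ∀ i : Fin (σ.domP R).length, PHTerm σ V ((σ.domP R).get i)} :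
    satAtom P ρ (.rel R u) ↔
      ∃ x : ∀ i, P.carrier ((σ.domP R).get i),
        (∀ i, evalTm P ρ (u i) = some (x i)) ∧ P.interpP R x := by
  constructor
  · rintro ⟨hd, hp⟩
    exact ⟨fun i => (evalTm P ρ (u i)).get (hd i),
      fun i => (Option.some_get (hd i)).symm, hp⟩
  · rintro ⟨x, hx, hp⟩
    have hd : ∀ i, (evalTm P ρ (u i)).isSome := fun i => by rw [hx i]; rfl
    refine ⟨hd, ?_⟩
    have e : ∀ i, (evalTm P ρ (u i)).get (hd i) = x i := fun i =>
      Option.some.inj ((Option.some_get (hd i)).trans (hx i))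
    rw [show (fun i => (evalTm P ρ (u i)).get (hd i)) = x from funext e]
    exact hp

/-! ### Semantic congruence lemmas -/

theorem eval_app_cong {σ : PHSig S} {V : S → Type} {P : PHModel σ}
    {ρ : ∀ s, V s → P.carrier s} {f : σ.F}
    {u w : ∀ i : Fin (σ.domF f).length, PHTerm σ V ((σ.domF f).get i)}
    (h : ∀ i, evalTm P ρ (u i) = evalTm P ρ (w i)) :
    evalTm P ρ (.app f u) = evalTm P ρ (.app f w) := by
  rw [evalTm_app, evalTm_app,
    show (fun i => evalTm P ρ (u i)) = fun i => evalTm P ρ (w i) from funext h]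

theorem eval_app_arg_isSome {σ : PHSig S} {V : S → Type} {P : PHModel σ}
    {ρ : ∀ s, V s → P.carrier s} {f : σ.F}
    {args : ∀ i : Fin (σ.domF f).length, PHTerm σ V ((σ.domF f).get i)}
    (h : (evalTm P ρ (.app f args)).isSome) (i : Fin (σ.domF f).length) :
    (evalTm P ρ (args i)).isSome := by
  rw [evalTm_app] at h
  cases ho : optAll (fun i => evalTm P ρ (args i)) with
  | none => rw [ho] at h; simp at h
  | some x => exact (optAll_isSome_iff _).1 (by rw [ho]; rfl) i

theorem dfd_app_arg {Θ : PHTheory S} {f : Θ.sig.F}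
    {args : ∀ i : Fin (Θ.sig.domF f).length, ClosedTm Θ ((Θ.sig.domF f).get i)}
    (h : PHThm Θ (closedSeq (.dfd (.app f args)))) (i : Fin (Θ.sig.domF f).length) :
    PHThm Θ (closedSeq (.dfd (args i))) :=
  thm_closed_intro fun _P hP => eval_app_arg_isSome (dfd_elim h hP) i

theorem dfd_app_congr {Θ : PHTheory S} {f : Θ.sig.F}
    {u w : ∀ i : Fin (Θ.sig.domF f).length, ClosedTm Θ ((Θ.sig.domF f).get i)}
    (he : ∀ i, PHThm Θ (closedSeq (.eq (u i) (w i))))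
    (hd : PHThm Θ (closedSeq (.dfd (.app f u)))) :
    PHThm Θ (closedSeq (.dfd (.app f w))) :=
  thm_closed_intro fun P hP => by
    have h1 : (evalTm P rho0 (PHTerm.app f u)).isSome := dfd_elim hd hP
    have hc := eval_app_cong (P := P) (ρ := rho0) (f := f)
      (fun i => (eqT_elim (he i) hP).2)
    show (evalTm P rho0 (PHTerm.app f w)).isSome
    rw [← hc]; exact h1

theorem eqT_app_congr {Θ : PHTheory S} {f : Θ.sig.F}
    {u w : ∀ i : Fin (Θ.sig.domF f).length, ClosedTm Θ ((Θ.sig.domF f).get i)}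
    (he : ∀ i, PHThm Θ (closedSeq (.eq (u i) (w i))))
    (hd : PHThm Θ (closedSeq (.dfd (.app f u)))) :
    PHThm Θ (closedSeq (.eq (.app f u) (.app f w))) :=
  thm_closed_intro fun P hP =>
    ⟨dfd_elim hd hP, eval_app_cong (fun i => (eqT_elim (he i) hP).2)⟩

theorem eqT_rel_congr {Θ : PHTheory S} {R : Θ.sig.P}
    {u w : ∀ i : Fin (Θ.sig.domP R).length, ClosedTm Θ ((Θ.sig.domP R).get i)}
    (he : ∀ i, PHThm Θ (closedSeq (.eq (u i) (w i))))
    (h : PHThm Θ (closedSeq (.rel R u))) :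
    PHThm Θ (closedSeq (.rel R w)) :=
  thm_closed_intro fun P hP => by
    have hs := thm_closed_elim h hP
    erw [sat_rel_iff] at hs
    obtain ⟨x, hx, hp⟩ := hs
    erw [sat_rel_iff]
    exact ⟨x, fun i => ((eqT_elim (he i) hP).2).symm.trans (hx i), hp⟩

/-! ### Substitution lemmas -/

theorem evalTm_subst {σ : PHSig S} {V W : S → Type} {P : PHModel σ}
    {θ : ∀ s, V s → PHTerm σ W s} {ρ : ∀ s, W s → P.carrier s}
    {ρ' : ∀ s, V s → P.carrier s}
    (hθ : ∀ s v, evalTm P ρ (θ s v) = some (ρ' s v)) {s : S} (t : PHTerm σ V s) :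
    evalTm P ρ (substTm θ t) = evalTm P ρ' t := by
  induction t with
  | var v => exact hθ _ v
  | app f args ih =>
    rw [substTm_app, evalTm_app, evalTm_app,
      show (fun i => evalTm P ρ (substTm θ (args i))) = fun i => evalTm P ρ' (args i) from
        funext ih]

theorem evalTm_substCong {σ : PHSig S} {V W : S → Type} {P : PHModel σ}
    {θ₁ θ₂ : ∀ s, V s → PHTerm σ W s} {ρ : ∀ s, W s → P.carrier s}
    (hθ : ∀ s v, evalTm P ρ (θ₁ s v) = evalTm P ρ (θ₂ s v)) {s : S} (t : PHTerm σ V s) :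
    evalTm P ρ (substTm θ₁ t) = evalTm P ρ (substTm θ₂ t) := by
  induction t with
  | var v => exact hθ _ v
  | app f args ih =>
    rw [substTm_app, substTm_app, evalTm_app, evalTm_app,
      show (fun i => evalTm P ρ (substTm θ₁ (args i)))
          = fun i => evalTm P ρ (substTm θ₂ (args i)) from funext ih]

/-! ### Evaluation in the term model -/

noncomputable def subOut {Θ : PHTheory S} {V : S → Type}
    (ρ : ∀ s, V s → TermCarrier Θ s) : ∀ s, V s → ClosedTm Θ s :=
  fun s v => repOf (ρ s v)

open Classical in
theorem TM_eval {Θ : PHTheory S} {V : S → Type} (ρ : ∀ s, V s → TermCarrier Θ s) {s : S}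
    (t : PHTerm Θ.sig V s) :
    evalTm (TermModel Θ) ρ t =
      if h : PHThm Θ (closedSeq (.dfd (substTm (subOut ρ) t)))
      then some (Quot.mk _ ⟨substTm (subOut ρ) t, h⟩) else none := by
  induction t with
  | var v =>
    rw [dif_pos (show PHThm Θ (closedSeq (.dfd (substTm (subOut ρ) (.var v)))) from
      repOf_dfd (ρ _ v))]
    show some (ρ _ v) = _
    congr 1
    rw [show (⟨substTm (subOut ρ) (PHTerm.var v), repOf_dfd (ρ _ v)⟩ : DefTm Θ _)
        = Quot.out (ρ _ v) from rfl]
    exact (Quot.out_eq _).symm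
  | app f args ih =>
    by_cases hall : ∀ i, PHThm Θ (closedSeq (.dfd (substTm (subOut ρ) (args i))))
    · have hev : (fun i => evalTm (TermModel Θ) ρ (args i))
          = fun i => some (Quot.mk _ ⟨substTm (subOut ρ) (args i), hall i⟩) :=
        funext fun i => by rw [ih i, dif_pos (hall i)]
      erw [evalTm_app, hev, optAll_some]
      set A : ∀ i, TermCarrier Θ ((Θ.sig.domF f).get i) :=
        fun i => Quot.mk _ ⟨substTm (subOut ρ) (args i), hall i⟩ with hA
      have hEq : ∀ i, PHThm Θ (closedSeq (.eq ((Quot.out (A i)).1)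
          (substTm (subOut ρ) (args i)))) := fun i => repOf_mk _
      by_cases hc : PHThm Θ (closedSeq (.dfd (substTm (subOut ρ) (PHTerm.app f args))))
      · have hc' : PHThm Θ (closedSeq (.dfd (.app f (fun i => (Quot.out (A i)).1)))) :=
          dfd_app_congr (fun i => eqT_symm (hEq i)) hc
        have h1 : (TermModel Θ).interpF f A
            = some (Quot.mk _ ⟨.app f (fun i => (Quot.out (A i)).1), hc'⟩) := dif_pos hc'
        erw [Option.bind_some, h1, dif_pos hc]
        congr 1
        exact Quot.sound (eqT_app_congr hEq hc')
      · have hc' : ¬ PHThm Θ (closedSeq (.dfd (.app f (fun i => (Quot.out (A i)).1)))) :=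
          fun hc' => hc (dfd_app_congr hEq hc')
        have h1 : (TermModel Θ).interpF f A = none := dif_neg hc'
        erw [Option.bind_some, h1, dif_neg hc]; rfl
    · push_neg at hall
      obtain ⟨i, hni⟩ := hall
      have : evalTm (TermModel Θ) ρ (args i) = none := by rw [ih i, dif_neg hni]; rfl
      erw [evalTm_app, optAll_none _ i this, Option.bind_none, dif_neg]; rfl
      intro hc
      exact hni (dfd_app_arg hc i)
/-! ### castArgs lemmas -/

theorem castArgs_rfl {C : S → Type} {l : List S} (x : ∀ i : Fin l.length, C (l.get i)) :
    castArgs rfl x = x := rfl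

theorem castArgs_pointwise {C D : S → Type} {l l' : List S} (e : l = l')
    (u : ∀ i : Fin l.length, C (l.get i)) (F : ∀ {s : S}, C s → D s) :
    castArgs e (fun i => F (u i)) = fun i => F (castArgs e u i) := by
  subst e; rfl

theorem castArgs_eval {σ : PHSig S} {P : PHModel σ} {V : S → Type}
    {ρ : ∀ s, V s → P.carrier s} {l l' : List S} (e : l = l')
    (u : ∀ i : Fin l.length, PHTerm σ V (l.get i)) (x : ∀ i, P.carrier (l.get i))
    (h : ∀ i, evalTm P ρ (u i) = some (x i)) :
    ∀ i, evalTm P ρ (castArgs e u i) = some (castArgs e x i) := by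
  subst e; exact h

/-! ### The extension of a model by constants -/

def extModel {σ' : PHSig S} (N : PHModel σ') {A : S → Type}
    (hh : ∀ s, A s → N.carrier s) : PHModel (langSig σ' A) where
  carrier := N.carrier
  interpF := fun g => match g with
    | Sum.inl g => N.interpF g
    | Sum.inr ⟨s, a⟩ => fun _ => some (hh s a)
  interpP := N.interpP

theorem ext_eval_lift {σ' : PHSig S} {A : S → Type} {N : PHModel σ'}
    {hh : ∀ s, A s → N.carrier s} {V : S → Type} (ρ : ∀ s, V s → N.carrier s) {s : S}
    (t : PHTerm σ' V s) :
    evalTm (extModel N hh) ρ (liftTm t) = evalTm N ρ t := by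
  induction t with
  | var v => rfl
  | app g args ih =>
    show (optAll fun i => evalTm (extModel N hh) ρ (liftTm (args i))).bind
        (N.interpF g) = (optAll fun i => evalTm N ρ (args i)).bind (N.interpF g)
    simp only [ih]; rfl

theorem ext_eval_const {σ' : PHSig S} {A : S → Type} {N : PHModel σ'}
    {hh : ∀ s, A s → N.carrier s} {V : S → Type} (ρ : ∀ s, V s → N.carrier s) {s : S}
    (a : A s) :
    evalTm (extModel N hh) ρ (constTm (σ := σ') a) = some (hh s a) := by
  show (optAll fun i : Fin 0 => _).bind _ = _
  erw [optAll_eq_get _ (fun i => i.elim0)]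
  rfl

theorem ext_sat_liftAtom {σ' : PHSig S} {A : S → Type} {N : PHModel σ'}
    {hh : ∀ s, A s → N.carrier s} {V : S → Type} (ρ : ∀ s, V s → N.carrier s)
    (a : PHAtom σ' V) :
    satAtom (extModel N hh) ρ (liftAtom a) ↔ satAtom N ρ a := by
  cases a with
  | eq t₁ t₂ =>
    show (_ ∧ _) ↔ (_ ∧ _)
    rw [ext_eval_lift, ext_eval_lift]; exact Iff.rfl
  | dfd t =>
    show _ ↔ _
    rw [show satAtom (extModel N hh) ρ (liftAtom (.dfd t))
        = (evalTm (extModel N hh) ρ (liftTm t)).isSome from rfl, ext_eval_lift]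
    rfl
  | rel R args =>
    show satAtom (extModel N hh) ρ (.rel R (fun i => liftTm (args i))) ↔ _
    erw [sat_rel_iff, sat_rel_iff]
    constructor
    · rintro ⟨x, hx, hp⟩
      exact ⟨x, fun i => (ext_eval_lift ρ (args i)).symm.trans (hx i), hp⟩
    · rintro ⟨x, hx, hp⟩
      exact ⟨x, fun i => (ext_eval_lift ρ (args i)).trans (hx i), hp⟩

theorem ext_sat_liftSeq {σ' : PHSig S} {A : S → Type} {N : PHModel σ'}
    {hh : ∀ s, A s → N.carrier s} {sq : PHSequent σ'} (hsat : N.satSeq sq) :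
    (extModel N hh).satSeq (liftSeq sq) := by
  intro ρ hhyps
  show satAtom (extModel N hh) ρ (liftAtom sq.concl)
  erw [ext_sat_liftAtom]
  apply hsat ρ
  intro a ha
  erw [← ext_sat_liftAtom (hh := hh)]
  exact hhyps (liftAtom a) (List.mem_map_of_mem ha)

/-! ### Restriction along the inclusion -/

theorem restrict_incl_interpF {σ' : PHSig S} {B : S → Type} (X : PHModel (langSig σ' B))
    (g : σ'.F) (A : ∀ i : Fin (σ'.domF g).length, X.carrier ((σ'.domF g).get i)) :
    (restrict inclLang X).interpF g A = X.interpF (Sum.inl g) A := by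
  have h1 : (restrict inclLang X).interpF g A
      = (optAll (fun i => (some (A i) : Option (X.carrier ((σ'.domF g).get i))))).bind
          (X.interpF (Sum.inl g)) := rfl
  rw [h1, optAll_some]
  rfl

theorem restrict_incl_interpP {σ' : PHSig S} {B : S → Type} (X : PHModel (langSig σ' B))
    (R : σ'.P) (A : ∀ i : Fin (σ'.domP R).length, X.carrier ((σ'.domP R).get i)) :
    (restrict inclLang X).interpP R A = X.interpP R A := rfl

theorem restrict_incl_eval {σ' : PHSig S} {B : S → Type} (X : PHModel (langSig σ' B))
    {V : S → Type} (ρ : ∀ s, V s → X.carrier s) {s : S} (t : PHTerm σ' V s) :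
    evalTm (restrict inclLang X) ρ t = evalTm X ρ (liftTm t) := by
  induction t with
  | var v => rfl
  | app g args ih =>
    erw [evalTm_app, liftTm_app, evalTm_app,
      show (fun i => evalTm (restrict inclLang X) ρ (args i))
        = fun i => evalTm X ρ (liftTm (args i)) from funext ih]
    congr 1
    funext A
    exact restrict_incl_interpF X g A

/-! ### Syntactic lemmas about pushHom and lifting -/

theorem substTm_constTm {σ : PHSig S} {A V W : S → Type} (θ : ∀ s, V s → PHTerm (langSig σ A) W s)
    {s : S} (a : A s) : substTm θ (constTm (σ := σ) a) = constTm a := by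
  show PHTerm.app _ _ = PHTerm.app _ _
  congr 1
  funext i
  exact i.elim0

theorem mapTm_push_const {σ σ' : PHSig S} (f : SigHom σ σ') {A V : S → Type} {s : S}
    (a : A s) : mapTm (pushHom f A) (constTm (σ := σ) (V := V) a) = constTm a :=
  substTm_constTm _ a

theorem transport_liftTm {σ : PHSig S} {A V : S → Type} {s s' : S} (h : s = s')
    (t : PHTerm σ V s) : liftTm (A := A) (h ▸ t) = h ▸ liftTm (A := A) t := by
  subst h; rfl

theorem liftTm_substTm {σ : PHSig S} {A V W : S → Type} (θ : ∀ s, V s → PHTerm σ W s)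
    {s : S} (t : PHTerm σ V s) :
    liftTm (A := A) (substTm θ t) = substTm (fun s v => liftTm (θ s v)) (liftTm t) := by
  induction t with
  | var v => rfl
  | app g args ih =>
    erw [substTm_app, liftTm_app, liftTm_app, substTm_app]
    congr 1
    funext i
    exact ih i

theorem push_lift_tm {σ σ' : PHSig S} (f : SigHom σ σ') {A V : S → Type} {s : S}
    (t : PHTerm σ V s) :
    mapTm (pushHom f A) (liftTm t) = liftTm (mapTm f t) := by
  induction t with
  | var v => rfl
  | app g args ih =>
    erw [liftTm_app, mapTm_app, mapTm_app, liftTm_substTm]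
    show substTm _ (liftTm (f.onF g)) = substTm _ (liftTm (f.onF g))
    congr 1
    funext s' v
    obtain ⟨i, hi⟩ := v
    subst hi
    show mapTm (pushHom f A) (liftTm (args i)) = liftTm (mapTm f (args i))
    exact ih i

theorem push_lift_atom {σ σ' : PHSig S} (f : SigHom σ σ') {A V : S → Type}
    (a : PHAtom σ V) :
    mapAtom (pushHom f A) (liftAtom a) = liftAtom (mapAtom f a) := by
  cases a with
  | eq t₁ t₂ => show PHAtom.eq _ _ = PHAtom.eq _ _; rw [push_lift_tm, push_lift_tm]
  | dfd t => show PHAtom.dfd _ = PHAtom.dfd _; rw [push_lift_tm]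
  | rel R args =>
    have e : (castArgs (f.onPdom R).symm
        (fun i => mapTm (pushHom f A) (liftTm (args i))))
        = fun i => liftTm (A := A)
            ((castArgs (f.onPdom R).symm (fun i => mapTm f (args i))) i) := by
      rw [show (fun i => mapTm (pushHom f A) (liftTm (args i)))
          = fun i => liftTm (A := A) (mapTm f (args i)) from
          funext fun i => push_lift_tm f (args i)]
      exact castArgs_pointwise (f.onPdom R).symm (fun i => mapTm f (args i))
        (fun {s} t => liftTm (A := A) t)
    show PHAtom.rel (σ := langSig σ' A) (f.onP R)
        (castArgs (f.onPdom R).symm fun i => mapTm (pushHom f A) (liftTm (args i)))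
      = PHAtom.rel (σ := langSig σ' A) (f.onP R)
        (fun i => liftTm (A := A) ((castArgs (f.onPdom R).symm fun i => mapTm f (args i)) i))
    rw [e]

theorem push_lift_seq {σ σ' : PHSig S} (f : SigHom σ σ') {A : S → Type}
    (sq : PHSequent σ) :
    mapSeq (pushHom f A) (liftSeq sq) = liftSeq (mapSeq f sq) := by
  simp only [mapSeq, liftSeq]
  rw [List.map_map, List.map_map, push_lift_atom,
    show (mapAtom (pushHom f A) ∘ liftAtom : PHAtom σ sq.V → _) = liftAtom ∘ mapAtom f from
      funext fun a => push_lift_atom f a]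
/-! ### The pushout theory and the unit -/

section Main

variable {σ σ' : PHSig S} {T : Set (PHSequent σ)} {T' : Set (PHSequent σ')}
  {f : SigHom σ σ'} {M : PHModel σ}

theorem push_ax_thm {sq : PHSequent (langSig σ' M.carrier)}
    (hsq : sq ∈ pushAx T T' f M) : PHThm (PushTheory T T' f M) sq :=
  fun _P hP => hP sq hsq

theorem push_thm_of_lang {t : PHSequent (langSig σ M.carrier)} (ht : LangAx T M t) :
    PHThm (PushTheory T T' f M) (mapSeq (pushHom f M.carrier) t) :=
  push_ax_thm (Or.inr ⟨t, ht, rfl⟩)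

theorem dfd_const (s : S) (a : M.carrier s) :
    PHThm (PushTheory T T' f M) (closedSeq (.dfd (constTm (σ := σ') a))) := by
  have h := push_thm_of_lang (T := T) (T' := T') (f := f) (LangAx.const (T := T) (σ := σ) a)
  erw [show mapSeq (pushHom f M.carrier) (closedSeq (.dfd (constTm a)))
      = closedSeq (.dfd (mapTm (pushHom f M.carrier) (constTm a))) from rfl,
    mapTm_push_const] at h; exact h

noncomputable def etaFun : ∀ s, M.carrier s → TermCarrier (PushTheory T T' f M) s :=
  fun s a => Quot.mk _ ⟨constTm a, dfd_const s a⟩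

theorem repOf_eta (s : S) (a : M.carrier s) :
    PHThm (PushTheory T T' f M)
      (closedSeq (.eq (repOf (etaFun (T := T) (T' := T') (f := f) s a)) (constTm a))) :=
  repOf_mk _

theorem eta_mapF (g : σ.F)
    (args : ∀ i : Fin (σ.domF g).length, M.carrier ((σ.domF g).get i))
    (b : M.carrier (σ.codF g)) (hgb : M.interpF g args = some b) :
    (restrict f (fShriek T T' f M)).interpF g (fun i => etaFun _ (args i))
      = some (etaFun _ b) := by
  have hax0 := push_thm_of_lang (T' := T') (f := f) (LangAx.op (T := T) g args b hgb)
  have hseq : mapSeq (pushHom f M.carrier)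
        (closedSeq (.eq (@PHTerm.app S (langSig σ M.carrier) emptyV (Sum.inl g)
            (fun i => constTm (args i)))
          (constTm (σ := σ) b)))
      = closedSeq (.eq (substTm (fun s (v : argVars (σ.domF g) s) =>
            v.2 ▸ constTm (σ := σ') (V := emptyV) (args v.1)) (liftTm (f.onF g))) (constTm b)) := by
    show closedSeq (.eq (substTm (fun s (v : argVars (σ.domF g) s) =>
          v.2 ▸ mapTm (pushHom f M.carrier) (constTm (σ := σ) (V := emptyV) (args v.1))) (liftTm (f.onF g)))
        (mapTm (pushHom f M.carrier) (constTm b))) = _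
    have hfun : (fun s (v : argVars (σ.domF g) s) =>
          v.2 ▸ mapTm (pushHom f M.carrier) (constTm (σ := σ) (V := emptyV) (args v.1)))
        = fun s (v : argVars (σ.domF g) s) => v.2 ▸ constTm (σ := σ') (V := emptyV) (args v.1) := by
      funext s v
      obtain ⟨i, hi⟩ := v
      subst hi
      exact mapTm_push_const f (args i)
    rw [mapTm_push_const, hfun]
  have hax : PHThm (PushTheory T T' f M)
      (closedSeq (.eq (substTm (fun s (v : argVars (σ.domF g) s) =>
          v.2 ▸ constTm (σ := σ') (V := emptyV) (args v.1)) (liftTm (f.onF g))) (constTm b))) :=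
    hseq ▸ hax0
  have h1 : (restrict f (fShriek T T' f M)).interpF g (fun i => etaFun _ (args i))
      = evalTm (TermModel (PushTheory T T' f M))
          (fun s (v : argVars (σ.domF g) s) => v.2 ▸ etaFun _ (args v.1))
          (liftTm (f.onF g)) :=
    restrict_incl_eval _ _ _
  set ρA : ∀ s, argVars (σ.domF g) s → TermCarrier (PushTheory T T' f M) s :=
    fun s (v : argVars (σ.domF g) s) => v.2 ▸ etaFun _ (args v.1) with hρA
  have hvv : ∀ s (v : argVars (σ.domF g) s),
      PHThm (PushTheory T T' f M) (closedSeq (.eq (subOut ρA s v)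
        (v.2 ▸ constTm (σ := σ') (V := emptyV) (args v.1)))) := by
    intro s v
    obtain ⟨i, hi⟩ := v
    subst hi
    exact repOf_eta _ (args i)
  have hd : PHThm (PushTheory T T' f M)
      (closedSeq (.dfd (substTm (subOut ρA) (liftTm (f.onF g))))) :=
    thm_closed_intro fun P hP => by
      have hsub := evalTm_substCong (P := P) (ρ := rho0)
        (θ₂ := fun s (v : argVars (σ.domF g) s) => v.2 ▸ constTm (σ := σ') (V := emptyV) (args v.1))
        (fun s v => (eqT_elim (hvv s v) hP).2) (liftTm (f.onF g))
      show (evalTm P rho0 (substTm (subOut ρA) (liftTm (f.onF g)))).isSome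
      rw [hsub]
      exact (eqT_elim hax hP).1
  have heq : PHThm (PushTheory T T' f M)
      (closedSeq (.eq (substTm (subOut ρA) (liftTm (f.onF g))) (constTm b))) :=
    thm_closed_intro fun P hP => by
      have hsub := evalTm_substCong (P := P) (ρ := rho0)
        (θ₂ := fun s (v : argVars (σ.domF g) s) => v.2 ▸ constTm (σ := σ') (V := emptyV) (args v.1))
        (fun s v => (eqT_elim (hvv s v) hP).2) (liftTm (f.onF g))
      obtain ⟨ha1, ha2⟩ := eqT_elim hax hP
      exact ⟨by rw [hsub]; exact ha1, hsub.trans ha2⟩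
  erw [h1, TM_eval, dif_pos hd]
  congr 1
  exact Quot.sound heq

theorem eta_mapP (R : σ.P)
    (args : ∀ i : Fin (σ.domP R).length, M.carrier ((σ.domP R).get i))
    (hR : M.interpP R args) :
    (restrict f (fShriek T T' f M)).interpP R (fun i => etaFun _ (args i)) := by
  show PHThm (PushTheory T T' f M) (closedSeq (.rel (f.onP R)
    (fun i => repOf ((castArgs (f.onPdom R).symm (fun i => etaFun _ (args i))) i))))
  have hax0 := push_thm_of_lang (T' := T') (f := f) (LangAx.rel (T := T) R args hR)
  have hax : PHThm (PushTheory T T' f M) (closedSeq (PHAtom.rel (σ := langSig σ' M.carrier)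
      (f.onP R)
      (castArgs (f.onPdom R).symm (fun i => constTm (σ := σ') (V := emptyV) (args i))))) := by
    have hseq : mapSeq (pushHom f M.carrier) (closedSeq (.rel R (fun i => constTm (args i))))
        = closedSeq (PHAtom.rel (σ := langSig σ' M.carrier) (f.onP R)
            (castArgs (f.onPdom R).symm (fun i => constTm (σ := σ') (V := emptyV) (args i)))) := by
      show closedSeq (PHAtom.rel (σ := langSig σ' M.carrier) (f.onP R) (castArgs (f.onPdom R).symm
          (fun i => mapTm (pushHom f M.carrier) (constTm (σ := σ) (V := emptyV) (args i))))) = _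
      rw [show (fun i => mapTm (pushHom f M.carrier) (constTm (σ := σ) (V := emptyV) (args i)))
          = fun i => constTm (σ := σ') (V := emptyV) (args i) from funext fun i => mapTm_push_const f (args i)]
    erw [hseq] at hax0; exact hax0
  have h1 : castArgs (f.onPdom R).symm (fun i => constTm (σ := σ') (V := emptyV) (args i))
      = fun i => constTm (σ := σ') ((castArgs (f.onPdom R).symm args) i) :=
    castArgs_pointwise (f.onPdom R).symm args (fun {s} a => constTm a)
  have h2 : castArgs (f.onPdom R).symm (fun i => etaFun (T := T) (T' := T') (f := f) _ (args i))
      = fun i => etaFun (T := T) (T' := T') (f := f) _ ((castArgs (f.onPdom R).symm args) i) :=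
    castArgs_pointwise (f.onPdom R).symm args (fun {s} a => etaFun (T := T) (T' := T') (f := f) s a)
  refine eqT_rel_congr (fun i => ?_) hax
  rw [h1, h2]
  exact eqT_symm (repOf_eta _ _)

/-! ### The extended model is a model of the pushout theory -/

theorem ext_models (hf : IsTheoryMor ⟨σ, T⟩ ⟨σ', T'⟩ f) (N : PHModel σ')
    (hN : PHModels N T') (h : ModHom M (restrict f N)) :
    PHModels (extModel N h.h) (PushTheory T T' f M).ax := by
  intro sq hsq
  obtain (⟨t, ht, rfl⟩ | ⟨t, hLA, rfl⟩) := hsq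
  · exact ext_sat_liftSeq (hN t ht)
  · cases hLA with
    | @lift sq' hsq' =>
      rw [push_lift_seq]
      exact ext_sat_liftSeq (hf sq' hsq' N hN)
    | const a =>
      intro ρ _
      show satAtom (extModel N h.h) ρ (.dfd (mapTm (pushHom f M.carrier) (constTm a)))
      rw [mapTm_push_const]
      show (evalTm (extModel N h.h) ρ (constTm a)).isSome
      erw [ext_eval_const]
      rfl
    | op g args b hgb =>
      intro ρ _
      have hfun : (fun s (v : argVars (σ.domF g) s) =>
            v.2 ▸ mapTm (pushHom f M.carrier) (constTm (σ := σ) (V := emptyV) (args v.1)))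
          = fun s (v : argVars (σ.domF g) s) => v.2 ▸ constTm (σ := σ') (V := emptyV) (args v.1) := by
        funext s v
        obtain ⟨i, hi⟩ := v
        subst hi
        exact mapTm_push_const f (args i)
      show satAtom (extModel N h.h) ρ
        (.eq (substTm (fun s (v : argVars (σ.domF g) s) =>
              v.2 ▸ mapTm (pushHom f M.carrier) (constTm (σ := σ) (V := emptyV) (args v.1)))
            (liftTm (f.onF g)))
          (mapTm (pushHom f M.carrier) (constTm b)))
      erw [hfun, mapTm_push_const]
      have hsub : evalTm (extModel N h.h) ρ
          (substTm (fun s (v : argVars (σ.domF g) s) => v.2 ▸ constTm (σ := σ') (V := emptyV) (args v.1))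
            (liftTm (f.onF g)))
          = evalTm (extModel N h.h)
              (fun s (v : argVars (σ.domF g) s) => v.2 ▸ h.h _ (args v.1))
              (liftTm (f.onF g)) := by
        apply evalTm_subst
        intro s v
        obtain ⟨i, hi⟩ := v
        subst hi
        exact ext_eval_const ρ (args i)
      have hlift : evalTm (extModel N h.h)
          (fun s (v : argVars (σ.domF g) s) => v.2 ▸ h.h _ (args v.1)) (liftTm (f.onF g))
          = evalTm N (fun s (v : argVars (σ.domF g) s) => v.2 ▸ h.h _ (args v.1))
              (f.onF g) :=
        ext_eval_lift _ _
      have hres : evalTm N (fun s (v : argVars (σ.domF g) s) => v.2 ▸ h.h _ (args v.1))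
          (f.onF g) = some (h.h _ b) := h.mapF g args b hgb
      refine ⟨?_, ?_⟩
      · show (evalTm (extModel N h.h) ρ
            (substTm (fun s (v : argVars (σ.domF g) s) =>
              v.2 ▸ constTm (σ := σ') (V := emptyV) (args v.1)) (liftTm (f.onF g)))).isSome
        rw [hsub, hlift, hres]
        rfl
      · show evalTm (extModel N h.h) ρ
            (substTm (fun s (v : argVars (σ.domF g) s) =>
              v.2 ▸ constTm (σ := σ') (V := emptyV) (args v.1)) (liftTm (f.onF g)))
          = evalTm (extModel N h.h) ρ (constTm b)
        erw [ext_eval_const, hsub, hlift, hres]; rfl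
    | rel R args hRel =>
      intro ρ _
      show satAtom (extModel N h.h) ρ (PHAtom.rel (σ := langSig σ' M.carrier) (f.onP R)
        (castArgs (f.onPdom R).symm
          (fun i => mapTm (pushHom f M.carrier) (constTm (σ := σ) (V := emptyV) (args i)))))
      erw [show (fun i => mapTm (pushHom f M.carrier) (constTm (σ := σ) (V := emptyV) (args i)))
          = fun i => constTm (σ := σ') (V := emptyV) (args i) from funext fun i => mapTm_push_const f (args i)]
      rw [sat_rel_iff]
      refine ⟨castArgs (f.onPdom R).symm (fun i => h.h _ (args i)), ?_, ?_⟩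
      · exact castArgs_eval (f.onPdom R).symm _ _ (fun i => ext_eval_const ρ (args i))
      · exact h.mapP R args hRel

/-! ### The induced homomorphism -/

noncomputable def toHomFun (N : PHModel σ') (hh : ∀ s, M.carrier s → N.carrier s)
    (hN' : PHModels (extModel N hh) (PushTheory T T' f M).ax) :
    ∀ s, TermCarrier (PushTheory T T' f M) s → N.carrier s := fun _s =>
  Quot.lift (fun d => (evalTm (extModel N hh) rho0 d.1).get (dfd_elim d.2 hN'))
    (fun _ _ hr => get_congr (eqT_elim hr hN').2)

theorem toHom_repOf (N : PHModel σ') (hh : ∀ s, M.carrier s → N.carrier s)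
    (hN' : PHModels (extModel N hh) (PushTheory T T' f M).ax) {s : S}
    (c : TermCarrier (PushTheory T T' f M) s) :
    toHomFun N hh hN' s c
      = (evalTm (extModel N hh) rho0 (repOf c)).get (dfd_elim (repOf_dfd c) hN') := by
  conv_lhs => rw [← Quot.out_eq c]
  rfl

theorem toHom_const (N : PHModel σ') (hh : ∀ s, M.carrier s → N.carrier s)
    (hN' : PHModels (extModel N hh) (PushTheory T T' f M).ax) (s : S) (a : M.carrier s)
    (p : PHThm (PushTheory T T' f M) (closedSeq (.dfd (constTm a)))) :
    toHomFun N hh hN' s (Quot.mk _ ⟨constTm a, p⟩) = hh s a := by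
  show (evalTm (extModel N hh) rho0 (constTm a)).get (dfd_elim p hN') = hh s a
  exact get_congr (ext_eval_const rho0 a)

open Classical in
theorem fShriek_interpF (g : σ'.F)
    (A : ∀ i : Fin (σ'.domF g).length,
      TermCarrier (PushTheory T T' f M) ((σ'.domF g).get i)) :
    (fShriek T T' f M).interpF g A =
      if hc : PHThm (PushTheory T T' f M)
          (closedSeq (.dfd (@PHTerm.app S (langSig σ' M.carrier) emptyV (Sum.inl g) (fun i => repOf (A i)))))
      then some (Quot.mk _ ⟨@PHTerm.app S (langSig σ' M.carrier) emptyV (Sum.inl g) (fun i => repOf (A i)), hc⟩) else none := by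
  rw [show (fShriek T T' f M).interpF g A
      = (TermModel (PushTheory T T' f M)).interpF (Sum.inl g) A from
    restrict_incl_interpF (TermModel (PushTheory T T' f M)) g A]
  rfl

theorem toHom_mapF (N : PHModel σ') (hh : ∀ s, M.carrier s → N.carrier s)
    (hN' : PHModels (extModel N hh) (PushTheory T T' f M).ax) (g : σ'.F)
    (A : ∀ i : Fin (σ'.domF g).length, TermCarrier (PushTheory T T' f M) ((σ'.domF g).get i))
    (b : TermCarrier (PushTheory T T' f M) (σ'.codF g))
    (hgb : (fShriek T T' f M).interpF g A = some b) :
    N.interpF g (fun i => toHomFun N hh hN' _ (A i)) = some (toHomFun N hh hN' _ b) := by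
  rw [fShriek_interpF] at hgb
  by_cases hc : PHThm (PushTheory T T' f M)
      (closedSeq (.dfd (@PHTerm.app S (langSig σ' M.carrier) emptyV (Sum.inl g) (fun i => repOf (A i)))))
  case neg =>
    rw [dif_neg hc] at hgb
    exact absurd hgb (by simp)
  rw [dif_pos hc] at hgb
  obtain rfl : b = Quot.mk _ ⟨_, hc⟩ := (Option.some.inj hgb).symm
  have hsome : ∀ i, (evalTm (extModel N hh) rho0 (repOf (A i))).isSome :=
    fun i => dfd_elim (repOf_dfd (A i)) hN'
  have happ : evalTm (extModel N hh) rho0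
      (@PHTerm.app S (langSig σ' M.carrier) emptyV (Sum.inl g) (fun i => repOf (A i)))
      = N.interpF g (fun i => (evalTm (extModel N hh) rho0 (repOf (A i))).get (hsome i)) := by
    have h0 : (optAll fun i => evalTm (extModel N hh) rho0 (repOf (A i)))
        = some (fun i => (evalTm (extModel N hh) rho0 (repOf (A i))).get (hsome i)) :=
      optAll_eq_get _ hsome
    exact congrArg (fun o => Option.bind o ((extModel N hh).interpF (Sum.inl g))) h0
  have hfam : (fun i => (evalTm (extModel N hh) rho0 (repOf (A i))).get (hsome i))
      = fun i => toHomFun N hh hN' _ (A i) :=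
    funext fun i => (toHom_repOf N hh hN' (A i)).symm
  rw [← hfam, ← happ]
  exact (Option.some_get (dfd_elim hc hN')).symm

theorem toHom_mapP (N : PHModel σ') (hh : ∀ s, M.carrier s → N.carrier s)
    (hN' : PHModels (extModel N hh) (PushTheory T T' f M).ax) (R : σ'.P)
    (A : ∀ i : Fin (σ'.domP R).length, TermCarrier (PushTheory T T' f M) ((σ'.domP R).get i))
    (hR : (fShriek T T' f M).interpP R A) :
    N.interpP R (fun i => toHomFun N hh hN' _ (A i)) := by
  have hthm : PHThm (PushTheory T T' f M)
      (closedSeq (.rel R (fun i => repOf (A i)))) := hR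
  have hs := thm_closed_elim hthm hN'
  erw [sat_rel_iff] at hs
  obtain ⟨x, hx, hp⟩ := hs
  have hxx : (fun i => toHomFun N hh hN' _ (A i)) = x := funext fun i => by
    rw [toHom_repOf]
    exact get_congr (hx i)
  rw [hxx]
  exact hp

/-! ### Uniqueness -/

theorem hom_unique_aux (N : PHModel σ') (y z : ModHom (fShriek T T' f M) N)
    (hagree : ∀ (s : S) (a : M.carrier s),
      y.h s (etaFun (T := T) (T' := T') (f := f) s a) = z.h s (etaFun (T := T) (T' := T') (f := f) s a))
    {s : S} (t : PHTerm (langSig σ' M.carrier) emptyV s) :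
    ∀ p : PHThm (PushTheory T T' f M) (closedSeq (.dfd t)),
      y.h s (Quot.mk _ ⟨t, p⟩) = z.h s (Quot.mk _ ⟨t, p⟩) := by
  induction t with
  | var v => exact fun p => PEmpty.elim v
  | app g args ih =>
    intro p
    cases g with
    | inr sa =>
      obtain ⟨s₀, a⟩ := sa
      have hargs : args = fun i => Fin.elim0 i := funext fun i => Fin.elim0 i
      subst hargs
      exact hagree s₀ a
    | inl g =>
      have hargdef : ∀ i, PHThm (PushTheory T T' f M) (closedSeq (.dfd (args i))) :=
        fun i => dfd_app_arg p i
      set A : ∀ i, TermCarrier (PushTheory T T' f M) ((σ'.domF g).get i) :=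
        fun i => Quot.mk _ ⟨args i, hargdef i⟩ with hA
      have hEq : ∀ i, PHThm (PushTheory T T' f M)
          (closedSeq (.eq (repOf (A i)) (args i))) := fun i => repOf_mk _
      have hc : PHThm (PushTheory T T' f M)
          (closedSeq (.dfd (@PHTerm.app S (langSig σ' M.carrier) emptyV (Sum.inl g) (fun i => repOf (A i))))) :=
        dfd_app_congr (fun i => eqT_symm (hEq i)) p
      have hF : (fShriek T T' f M).interpF g A
          = some (Quot.mk _ ⟨@PHTerm.app S (langSig σ' M.carrier) emptyV (Sum.inl g) args, p⟩) := by
        rw [fShriek_interpF, dif_pos hc]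
        congr 1
        exact Quot.sound (eqT_app_congr hEq hc)
      have h1 := y.mapF g A _ hF
      have h2 := z.mapF g A _ hF
      rw [show (fun i => y.h _ (A i)) = fun i => z.h _ (A i) from
        funext fun i => ih i (hargdef i)] at h1
      exact Option.some.inj (h1.symm.trans h2)

end Main
/-- For any morphism of partial Horn theories `f : T → T'`, the functor
`f_! : Mod(T) → Mod(T')` defined by `f_!(M) = Syn(Lang(M) ⨿_T T')` is left adjoint to the
restriction functor `f* : Mod(T') → Mod(T)`: there is a unit `η : M → f*(f_!(M))` such
that for every model `N` of `T'` and homomorphism `h : M → f*(N)` there is a unique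
homomorphism `h' : f_!(M) → N` with `f*(h') ∘ η = h`. -/
theorem stmt4 {σ σ' : PHSig S} (T : Set (PHSequent σ)) (T' : Set (PHSequent σ'))
    (f : SigHom σ σ') (hf : IsTheoryMor ⟨σ, T⟩ ⟨σ', T'⟩ f)
    (M : PHModel σ) (hM : PHModels M T) :
    ∃ η : ModHom M (restrict f (fShriek T T' f M)),
      ∀ N : PHModel σ', PHModels N T' →
        ∀ h : ModHom M (restrict f N),
          ∃! h' : ModHom (fShriek T T' f M) N,
            ∀ (s : S) (a : M.carrier s), h'.h s (η.h s a) = h.h s a := by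
  classical
  refine ⟨⟨etaFun, fun g args b hgb => eta_mapF g args b hgb,
    fun R args hR => eta_mapP R args hR⟩, ?_⟩
  intro N hN h
  have hN' : PHModels (extModel N h.h) (PushTheory T T' f M).ax := ext_models hf N hN h
  refine ⟨⟨toHomFun N h.h hN', fun g A b hgb => toHom_mapF N h.h hN' g A b hgb,
    fun R A hR => toHom_mapP N h.h hN' R A hR⟩, fun s a => ?_, fun y hy => ?_⟩
  · exact toHom_const N h.h hN' s a (dfd_const s a)
  · have hfun : ∀ (s : S) (c : TermCarrier (PushTheory T T' f M) s),
        y.h s c = toHomFun N h.h hN' s c := by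
      intro s c
      conv_lhs => rw [← Quot.out_eq c]
      conv_rhs => rw [← Quot.out_eq c]
      generalize Quot.out c = d
      obtain ⟨t, p⟩ := d
      exact hom_unique_aux N y
        ⟨toHomFun N h.h hN', fun g A b hgb => toHom_mapF N h.h hN' g A b hgb,
          fun R A hR => toHom_mapP N h.h hN' R A hR⟩
        (fun s' a => (hy s' a).trans (toHom_const N h.h hN' s' a (dfd_const s' a)).symm) t p
    obtain ⟨yh, ymf, ymp⟩ := y
    have hyy : yh = toHomFun N h.h hN' := funext fun s => funext fun c => hfun s c
    subst hyy
    rfl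
end

section
/- In a type theory with an interval type, homogeneous path types, and the global coercion operation coe_1 (transport from left to an arbitrary point with coe_1(D, d, left) ≡ d), one can define the identity-type eliminator J satisfying its typing rule, and moreover J applied to refl is propositionally equal to the input: there is a term Jeq(D, d, a) : Id(J(D, d, a, a, refl(a)), d[a]). -/
/-- A (shallow) model of a type theory with an interval type `I` (endpoints `lf`, `rt`),
the connection `sq`, heterogeneous path types `Path` and coercion `coe1`
(`coe0` is the special case transporting from `lf` to `rt`). -/
structure CTT where
  Ty : Type
  Tm : Ty → Type
  I : Ty
  lf : Tm I
  rt : Tm I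
  sq : Tm I → Tm I → Tm I
  sq_il : ∀ i, sq i lf = lf
  sq_lj : ∀ j, sq lf j = lf
  sq_rj : ∀ j, sq rt j = j
  Path : (A : Tm I → Ty) → Tm (A lf) → Tm (A rt) → Ty
  path : {A : Tm I → Ty} → (f : ∀ i, Tm (A i)) → Tm (Path A (f lf) (f rt))
  pat : {A : Tm I → Ty} → {a : Tm (A lf)} → {a' : Tm (A rt)} →
      Tm (Path A a a') → (i : Tm I) → Tm (A i)
  pat_beta : ∀ {A : Tm I → Ty} (f : ∀ i, Tm (A i)) (i : Tm I), pat (path f) i = f i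
  pat_lf : ∀ {A : Tm I → Ty} {a : Tm (A lf)} {a' : Tm (A rt)} (p : Tm (Path A a a')),
      pat p lf = a
  pat_rt : ∀ {A : Tm I → Ty} {a : Tm (A lf)} {a' : Tm (A rt)} (p : Tm (Path A a a')),
      pat p rt = a'
  path_eta : ∀ {A : Tm I → Ty} {a : Tm (A lf)} {a' : Tm (A rt)} (p : Tm (Path A a a')),
      HEq (path (fun i => pat p i)) p
  coe1 : (D : Tm I → Ty) → Tm (D lf) → (i : Tm I) → Tm (D i)
  coe1_lf : ∀ D d, coe1 D d lf = d

namespace CTT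

variable (M : CTT)

/-- Homogeneous path types `a ⇝ a'`. -/
def HP (A : M.Ty) (a a' : M.Tm A) : M.Ty := M.Path (fun _ => A) a a'

/-- `refl`. -/
def rfl' {A : M.Ty} (a : M.Tm A) : M.Tm (M.HP A a a) := M.path (fun _ => a)

/-- Coercion from the fiber over `left` to the fiber over `right`. -/
def coe0 (D : M.Tm M.I → M.Ty) (d : M.Tm (D M.lf)) : M.Tm (D M.rt) := M.coe1 D d M.rt

/-- Concatenation of homogeneous paths. -/
def conc {A : M.Ty} {a b c : M.Tm A} (p : M.Tm (M.HP A a b)) (q : M.Tm (M.HP A b c)) :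
    M.Tm (M.HP A a c) :=
  cast (show M.Tm (M.HP A a (M.pat q M.rt)) = M.Tm (M.HP A a c) by
    exact congrArg (fun x => M.Tm (M.HP A a x)) (M.pat_rt q))
    (M.coe1 (fun i => M.HP A a (M.pat q i))
      (cast (show M.Tm (M.HP A a b) = M.Tm (M.HP A a (M.pat q M.lf)) by
        exact (congrArg (fun x => M.Tm (M.HP A a x)) (M.pat_lf q)).symm) p) M.rt)

/-- Inversion of homogeneous paths. -/
def symm' {A : M.Ty} {a b : M.Tm A} (p : M.Tm (M.HP A a b)) : M.Tm (M.HP A b a) :=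
  cast (show M.Tm (M.HP A (M.pat p M.rt) a) = M.Tm (M.HP A b a) by
    exact congrArg (fun x => M.Tm (M.HP A x a)) (M.pat_rt p))
    (M.coe1 (fun i => M.HP A (M.pat p i) a)
      (cast (show M.Tm (M.HP A a a) = M.Tm (M.HP A (M.pat p M.lf) a) by
        exact (congrArg (fun x => M.Tm (M.HP A x a)) (M.pat_lf p)).symm)
        (M.rfl' a)) M.rt)

/-- Action of a function on paths. -/
def apm {A B : M.Ty} (g : M.Tm A → M.Tm B) {a a' : M.Tm A} (p : M.Tm (M.HP A a a')) :
    M.Tm (M.HP B (g a) (g a')) :=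
  cast (show M.Tm (M.HP B (g (M.pat p M.lf)) (g (M.pat p M.rt))) = M.Tm (M.HP B (g a) (g a'))
      by exact congrArg₂ (fun x y => M.Tm (M.HP B (g x) (g y))) (M.pat_lf p) (M.pat_rt p))
    (M.path (fun i => g (M.pat p i)))

end CTT

/-!
Coerce `d a` along the connection family `i ↦ D(p(sq(i,0)), p(sq(i,1)), λj. p(sq(i,j)))`,
which is `D(a,a,refl a)` at `0` and `D(a,a',p)` at `1`. For `p = refl a` this family is
constant, so `k ↦ coe_1(…, d a, k)` is itself a path from `d a` to `J(refl a)`; `Jeq` is its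
inverse.
-/

namespace CTT

variable (M : CTT)

theorem heq_path_of_eq {A : M.Tm M.I → M.Ty} {f g : ∀ i, M.Tm (A i)} (h : f = g) :
    HEq (M.path f) (M.path g) := by
  rw [h]

theorem nonempty_hp_of_heq_coe0 {D : M.Tm M.I → M.Ty} {B : M.Ty} (hD : ∀ i, D i = B)
    (d : M.Tm (D M.lf)) {b b' : M.Tm B} (hb : HEq b d) (hb' : HEq b' (M.coe0 D d)) :
    Nonempty (M.Tm (M.HP B b b')) := by
  let c : ∀ i, M.Tm B := fun i => cast (congrArg M.Tm (hD i)) (M.coe1 D d i)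
  have hlf : c M.lf = b :=
    eq_of_heq <| (cast_heq _ _).trans <| (heq_of_eq (M.coe1_lf D d)).trans hb.symm
  have hrt : c M.rt = b' := eq_of_heq <| (cast_heq _ _).trans hb'.symm
  exact ⟨hlf ▸ hrt ▸ M.path c⟩

section Eliminator

variable {A : M.Ty} (D : (x y : M.Tm A) → M.Tm (M.HP A x y) → M.Ty)

theorem hp_family_congr {x x' y y' : M.Tm A} {q : M.Tm (M.HP A x y)}
    {q' : M.Tm (M.HP A x' y')} (hx : x = x') (hy : y = y') (hq : HEq q q') :
    D x y q = D x' y' q' := by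
  subst hx hy
  rw [eq_of_heq hq]

/-- The paper's first index `a` is written as `p(sq(i, left))`, since `sq i lf = lf` holds only
propositionally here. -/
def jFamily {a a' : M.Tm A} (p : M.Tm (M.HP A a a')) (i : M.Tm M.I) : M.Ty :=
  D (M.pat p (M.sq i M.lf)) (M.pat p (M.sq i M.rt)) (M.path fun j => M.pat p (M.sq i j))

theorem jFamily_lf {a a' : M.Tm A} (p : M.Tm (M.HP A a a')) :
    M.jFamily D p M.lf = D a a (M.rfl' a) := by
  have hp : ∀ j, M.pat p (M.sq M.lf j) = a := fun j => by rw [M.sq_lj]; exact M.pat_lf p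
  exact M.hp_family_congr D (hp _) (hp _) (M.heq_path_of_eq (funext hp))

theorem jFamily_rt {a a' : M.Tm A} (p : M.Tm (M.HP A a a')) :
    M.jFamily D p M.rt = D a a' p := by
  have hp : (fun j => M.pat p (M.sq M.rt j)) = M.pat p := funext fun j => by rw [M.sq_rj]
  exact M.hp_family_congr D (by rw [M.sq_rj]; exact M.pat_lf p)
    (by rw [M.sq_rj]; exact M.pat_rt p) ((M.heq_path_of_eq hp).trans (M.path_eta p))

theorem jFamily_rfl' (a : M.Tm A) (i : M.Tm M.I) :
    M.jFamily D (M.rfl' a) i = D a a (M.rfl' a) := by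
  have hp : ∀ j, M.pat (M.rfl' a) j = a := M.pat_beta _
  exact M.hp_family_congr D (hp _) (hp _) (M.heq_path_of_eq (funext fun _ => hp _))

def J (d : ∀ x, M.Tm (D x x (M.rfl' x))) (a a' : M.Tm A) (p : M.Tm (M.HP A a a')) :
    M.Tm (D a a' p) :=
  cast (congrArg M.Tm (M.jFamily_rt D p))
    (M.coe0 (M.jFamily D p) (cast (congrArg M.Tm (M.jFamily_lf D p).symm) (d a)))

theorem nonempty_hp_J_rfl' (d : ∀ x, M.Tm (D x x (M.rfl' x))) (a : M.Tm A) :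
    Nonempty (M.Tm (M.HP (D a a (M.rfl' a)) (M.J D d a a (M.rfl' a)) (d a))) :=
  (M.nonempty_hp_of_heq_coe0 (M.jFamily_rfl' D a) _ (cast_heq _ _).symm (cast_heq _ _)).map
    M.symm'

end Eliminator

end CTT

/-- In a type theory with an interval type, homogeneous path types and the
global coercion `coe_1` (transport from `left` to an arbitrary point, with
`coe_1(D,d,left) ≡ d`), one can define the identity-type eliminator `J`
(where `Id(a,a') := a ⇝ a'` and `refl(a) := path(λx.a)`) satisfying its typing rule, and
moreover `J` applied to `refl` is propositionally equal to the input: there is a term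
`Jeq(D,d,a) : Id(J(D,d,a,a,refl(a)), d[a])`. -/
theorem stmt7 (M : CTT) :
    ∃ J : (A : M.Ty) → (D : (x y : M.Tm A) → M.Tm (M.HP A x y) → M.Ty) →
        (d : ∀ x : M.Tm A, M.Tm (D x x (M.rfl' x))) →
        (a a' : M.Tm A) → (p : M.Tm (M.HP A a a')) → M.Tm (D a a' p),
      ∀ (A : M.Ty) (D : (x y : M.Tm A) → M.Tm (M.HP A x y) → M.Ty)
        (d : ∀ x : M.Tm A, M.Tm (D x x (M.rfl' x))) (a : M.Tm A),
        Nonempty (M.Tm (M.HP (D a a (M.rfl' a)) (J A D d a a (M.rfl' a)) (d a))) :=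
  ⟨fun _ => M.J, fun _ => M.nonempty_hp_J_rfl'⟩
end
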